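/- For an irreducible finite Markov chain with transition matrix T, for any two states v0 and vk, the sum over all trajectories from v0 to vk that visit vk only at the final step of the product of transition probabilities along the trajectory equals 1. -/

import Mathlib

/-!
Let `Q` be `T` with the column of `vk` replaced by `0`, i.e. the chain killed on entering `vk`.
Peeling off first steps, the trajectories of length `n + 1` from `c` have total probability
`(Qⁿ T)(c, vk)`, which is `sₙ(c) - sₙ₊₁(c)` for the survival probabilities `sₙ = Qⁿ 1`. So the
total is `1 - lim sₙ(v0)`. The limit `s` of the decreasing sequence `sₙ` satisfies `Q s = s`; at a
positive maximum `c` of `s` this forces `T(c, vk) = 0` and all successors of `c` to be maximal as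
well, so the maximisers would form a closed set of states from which `vk` is unreachable.
Hence `s = 0`.
-/

/-- Index `0` is exempt from the avoidance condition, so `v0 = vk` gives the return
trajectories. -/
def FirstPassageTraj {V : Type*} (v0 vk : V) : Type _ :=
  {p : Σ k : ℕ, Fin (k + 1) → V //
    1 ≤ p.1 ∧ p.2 0 = v0 ∧ p.2 (Fin.last p.1) = vk ∧
    ∀ i : Fin (p.1 + 1), i ≠ 0 → i ≠ Fin.last p.1 → p.2 i ≠ vk}

def trajProb {V : Type*} (T : V → V → ℝ) {v0 vk : V} (t : FirstPassageTraj v0 vk) : ℝ :=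
  ∏ i : Fin t.1.1, T (t.1.2 i.castSucc) (t.1.2 i.succ)

open Finset Filter Topology Matrix

theorem HasSum.sigma_of_nonneg {α : Type*} {β : α → Type*} {f : (Σ a, β a) → ℝ} {g : α → ℝ}
    {s : ℝ} (hf : ∀ x, 0 ≤ f x) (hg : HasSum g s) (hfg : ∀ a, HasSum (fun b => f ⟨a, b⟩) (g a)) :
    HasSum f s :=
  hg.sigma_of_hasSum hfg <| (summable_sigma_of_nonneg hf).2
    ⟨fun a => (hfg a).summable, by simpa only [(hfg _).tsum_eq] using hg.summable⟩

namespace Matrix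

variable {V R : Type*}

theorem mulVec_nonneg [Semiring R] [PartialOrder R] [IsOrderedRing R] [Fintype V]
    {A : Matrix V V R} {x : V → R} (hA : ∀ a b, 0 ≤ A a b) (hx : 0 ≤ x) : 0 ≤ A *ᵥ x := fun i =>
  Finset.sum_nonneg fun b _ => mul_nonneg (hA i b) (hx b)

theorem updateCol_zero_nonneg [DecidableEq V] {T : Matrix V V ℝ} {j : V}
    (hT : ∀ a b, 0 ≤ T a b) (a b : V) : 0 ≤ T.updateCol j 0 a b := by
  rw [updateCol_apply]
  split_ifs
  exacts [le_rfl, hT a b]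

variable [Fintype V] [DecidableEq V]

theorem updateCol_zero_mulVec_add [NonUnitalNonAssocSemiring R] (T : Matrix V V R) (j : V)
    (x : V → R) (i : V) : (T.updateCol j 0 *ᵥ x) i + T i j * x j = (T *ᵥ x) i := by
  simp only [mulVec, dotProduct, updateCol_apply, ← Finset.add_sum_erase _ _ (mem_univ j)]
  rw [Finset.sum_congr rfl fun b hb => by rw [if_neg (ne_of_mem_erase hb)]]
  simp [add_comm]

variable {T : Matrix V V ℝ}

theorem exists_pos_pow_pos_of_mem_rowStochastic (hT : T ∈ rowStochastic ℝ V)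
    (hirred : ∀ i j : V, ∃ k : ℕ, 0 < (T ^ k) i j) (i j : V) : ∃ k > 0, 0 < (T ^ k) i j := by
  obtain ⟨l, -, hl⟩ := Finset.exists_ne_zero_of_sum_ne_zero (s := univ) (f := T i)
    (by rw [sum_row_of_mem_rowStochastic hT i]; exact one_ne_zero)
  obtain ⟨m, hm⟩ := hirred l j
  refine ⟨1 + m, by omega, ?_⟩
  rw [pow_add, pow_one, mul_apply]
  exact Finset.sum_pos' (fun d _ => mul_nonneg (hT.1 i d) (pow_apply_nonneg hT.1 m d j))
    ⟨l, mem_univ l, mul_pos ((hT.1 i l).lt_of_ne' hl) hm⟩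

theorem mem_of_pow_apply_pos (hT : ∀ a b, 0 ≤ T a b) {S : Set V}
    (hS : ∀ a ∈ S, ∀ b, 0 < T a b → b ∈ S) {a : V} (ha : a ∈ S) :
    ∀ {k : ℕ} {b : V}, 0 < (T ^ k) a b → b ∈ S
  | 0, b, hab => by
    rcases eq_or_ne a b with rfl | hne
    · exact ha
    · simp [one_apply_ne hne] at hab
  | k + 1, b, hab => by
    rw [pow_succ, mul_apply, Finset.sum_pos_iff_of_nonneg fun c _ =>
      mul_nonneg (pow_apply_nonneg hT k a c) (hT c b)] at hab
    obtain ⟨c, -, hc⟩ := hab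
    exact hS c (mem_of_pow_apply_pos hT hS ha (pos_of_mul_pos_left hc (hT c b))) b
      (pos_of_mul_pos_right hc (pow_apply_nonneg hT k a c))

variable {j : V}

/-- With `Q = T.updateCol j 0`, the inequality `ρ e = ∑ b, Q e b * ρ b ≤ (1 - T e j) * ρ e` is
forced to be an equality. -/
theorem maximum_spreads_of_updateCol_zero_mulVec_eq_self (hT : T ∈ rowStochastic ℝ V)
    {ρ : V → ℝ} (hρ : T.updateCol j 0 *ᵥ ρ = ρ) {e : V} (hmax : ∀ b, ρ b ≤ ρ e)
    (hpos : 0 < ρ e) : T e j = 0 ∧ ∀ b, 0 < T e b → ρ b = ρ e := by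
  have hrow : (T.updateCol j 0 *ᵥ 1) e + T e j = 1 := by
    simpa [hT.2] using updateCol_zero_mulVec_add T j 1 e
  have hgap (b : V) : 0 ≤ T.updateCol j 0 e b * (ρ e - ρ b) :=
    mul_nonneg (updateCol_zero_nonneg hT.1 e b) (sub_nonneg.2 (hmax b))
  have hzero : ∑ b, T.updateCol j 0 e b * (ρ e - ρ b) + ρ e * T e j = 0 := by
    have := congrFun hρ e
    simp only [mulVec, dotProduct, Pi.one_apply, mul_one] at this hrow
    simp only [mul_sub, Finset.sum_sub_distrib, ← Finset.sum_mul]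
    linear_combination ρ e * hrow - this
  obtain ⟨hsum, hej⟩ := (add_eq_zero_iff_of_nonneg (Finset.sum_nonneg fun b _ => hgap b)
    (mul_nonneg hpos.le (hT.1 e j))).1 hzero
  replace hej : T e j = 0 := (mul_eq_zero.1 hej).resolve_left hpos.ne'
  refine ⟨hej, fun b hb => ?_⟩
  have hbj : b ≠ j := by rintro rfl; exact hb.ne' hej
  have := (Finset.sum_eq_zero_iff_of_nonneg fun b _ => hgap b).1 hsum b (mem_univ b)
  rw [updateCol_ne hbj] at this
  linarith [(mul_eq_zero.1 this).resolve_left hb.ne']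

theorem le_zero_of_updateCol_zero_mulVec_eq_self (hT : T ∈ rowStochastic ℝ V)
    (hhit : ∀ i, ∃ k > 0, 0 < (T ^ k) i j) {ρ : V → ℝ} (hρ : T.updateCol j 0 *ᵥ ρ = ρ)
    (i : V) : ρ i ≤ 0 := by
  obtain ⟨d, -, hmax⟩ := Finset.exists_max_image univ ρ ⟨i, mem_univ i⟩
  by_contra! hi
  have hpos : 0 < ρ d := hi.trans_le (hmax i (mem_univ i))
  have hspread (e : V) (he : ρ e = ρ d) : T e j = 0 ∧ ∀ b, 0 < T e b → ρ b = ρ d := he ▸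
    maximum_spreads_of_updateCol_zero_mulVec_eq_self hT hρ (fun b => he ▸ hmax b (mem_univ b))
      (he ▸ hpos)
  obtain ⟨m, hm, hdj⟩ := hhit d
  obtain ⟨m, rfl⟩ := Nat.exists_eq_add_of_lt hm
  rw [zero_add, pow_succ, mul_apply, Finset.sum_eq_zero fun e _ => ?_] at hdj
  · exact lt_irrefl 0 hdj
  rcases (pow_apply_nonneg hT.1 m d e).eq_or_lt with he | he
  · rw [← he, zero_mul]
  · have hde : ρ e = ρ d :=
      mem_of_pow_apply_pos (S := {e | ρ e = ρ d}) hT.1 (fun a ha => (hspread a ha).2) rfl he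
    rw [(hspread e hde).1, mul_zero]

theorem updateCol_zero_pow_mulVec_one_sub_succ (hT : T ∈ rowStochastic ℝ V) (n : ℕ) :
    T.updateCol j 0 ^ n *ᵥ 1 - T.updateCol j 0 ^ (n + 1) *ᵥ 1 =
      T.updateCol j 0 ^ n *ᵥ fun i => T i j := by
  rw [pow_succ, ← mulVec_mulVec, ← mulVec_sub]
  congr 1
  funext i
  have := updateCol_zero_mulVec_add T j 1 i
  rw [hT.2] at this
  simp only [Pi.sub_apply, Pi.one_apply, mul_one] at this ⊢
  linarith

theorem tendsto_updateCol_zero_pow_mulVec_one (hT : T ∈ rowStochastic ℝ V)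
    (hhit : ∀ i, ∃ k > 0, 0 < (T ^ k) i j) :
    Tendsto (fun n => T.updateCol j 0 ^ n *ᵥ 1) atTop (𝓝 0) := by
  set Q := T.updateCol j 0
  have hQ : ∀ n a b, 0 ≤ (Q ^ n) a b := pow_apply_nonneg (updateCol_zero_nonneg hT.1)
  have hnonneg : ∀ n, 0 ≤ Q ^ n *ᵥ 1 := fun n => mulVec_nonneg (hQ n) zero_le_one
  have hanti : Antitone fun n => Q ^ n *ᵥ 1 := antitone_nat_of_succ_le fun n => by
    rw [← sub_nonneg, updateCol_zero_pow_mulVec_one_sub_succ hT]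
    exact mulVec_nonneg (hQ n) fun b => hT.1 b j
  have hlim := tendsto_atTop_ciInf hanti ⟨0, Set.forall_mem_range.2 hnonneg⟩
  set ρ := ⨅ n, Q ^ n *ᵥ 1
  have hρ : Q *ᵥ ρ = ρ := by
    refine tendsto_nhds_unique (((continuous_const.matrix_mulVec continuous_id).tendsto ρ).comp
      hlim) ?_
    simpa only [Function.comp_def, id, mulVec_mulVec, ← pow_succ'] using
      hlim.comp (tendsto_add_atTop_nat 1)
  have hρ0 : ρ = 0 := le_antisymm (le_zero_of_updateCol_zero_mulVec_eq_self hT hhit hρ)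
    (le_ciInf hnonneg)
  rwa [hρ0] at hlim

theorem hasSum_updateCol_zero_pow_mulVec (hT : T ∈ rowStochastic ℝ V)
    (hhit : ∀ i, ∃ k > 0, 0 < (T ^ k) i j) (i : V) :
    HasSum (fun n => (T.updateCol j 0 ^ n *ᵥ fun a => T a j) i) 1 := by
  rw [hasSum_iff_tendsto_nat_of_nonneg fun n =>
    mulVec_nonneg (pow_apply_nonneg (updateCol_zero_nonneg hT.1) n) (fun b => hT.1 b j) i]
  simp_rw [← updateCol_zero_pow_mulVec_one_sub_succ hT, Pi.sub_apply, Finset.sum_range_sub',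
    pow_zero, one_mulVec, Pi.one_apply]
  simpa using ((continuous_apply i).tendsto 0).comp
    (tendsto_updateCol_zero_pow_mulVec_one hT hhit) |>.const_sub 1

end Matrix

section Paths

variable {V : Type*}

def pathProb (T : Matrix V V ℝ) {k : ℕ} (p : Fin (k + 1) → V) : ℝ :=
  ∏ i : Fin k, T (p i.castSucc) (p i.succ)

theorem pathProb_cons (T : Matrix V V ℝ) (c : V) {k : ℕ} (q : Fin (k + 1) → V) :
    pathProb T (Fin.cons c q : Fin (k + 2) → V) = T c (q 0) * pathProb T q := by
  simp [pathProb, Fin.prod_univ_succ]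

theorem pathProb_nonneg {T : Matrix V V ℝ} (hT : ∀ a b, 0 ≤ T a b) {k : ℕ}
    (p : Fin (k + 1) → V) : 0 ≤ pathProb T p :=
  Finset.prod_nonneg fun _ _ => hT _ _

def HitsOnlyAtLast (j : V) {n : ℕ} (q : Fin (n + 1) → V) : Prop :=
  ∀ i, q i = j ↔ i = Fin.last n

theorem hitsOnlyAtLast_cons {j b : V} {n : ℕ} {q : Fin (n + 1) → V} :
    HitsOnlyAtLast j (Fin.cons b q : Fin (n + 2) → V) ↔ b ≠ j ∧ HitsOnlyAtLast j q := by
  simp [HitsOnlyAtLast, Fin.forall_fin_succ, ← Fin.succ_last, (Fin.succ_ne_zero _).symm]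

theorem hitsOnlyAtLast_zero {j : V} {q : Fin 1 → V} : HitsOnlyAtLast j q ↔ q 0 = j := by
  simp [HitsOnlyAtLast, Fin.forall_fin_one]

theorem firstPassageTraj_cond_iff {v0 vk : V} {n : ℕ} {p : Fin (n + 2) → V} :
    (1 ≤ n + 1 ∧ p 0 = v0 ∧ p (Fin.last (n + 1)) = vk ∧
      ∀ i : Fin (n + 2), i ≠ 0 → i ≠ Fin.last (n + 1) → p i ≠ vk) ↔
    p 0 = v0 ∧ HitsOnlyAtLast vk (Fin.tail p) := by
  simp only [HitsOnlyAtLast, Fin.tail, Fin.forall_fin_succ (n := n + 1), ← Fin.succ_last, ne_eq,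
    Fin.succ_ne_zero, Fin.succ_inj]
  constructor
  · rintro ⟨-, h0, hlast, hmid⟩
    exact ⟨h0, fun i => ⟨fun h => by_contra fun hi => hmid.2 i (by simp) hi h, fun h => h ▸ hlast⟩⟩
  · rintro ⟨h0, hq⟩
    exact ⟨by omega, h0, (hq _).2 rfl, by simp, fun i _ hi => mt (hq i).1 hi⟩

def firstPassageEquiv (v0 vk : V) :
    (Σ n, {q : Fin (n + 1) → V // HitsOnlyAtLast vk q}) ≃ FirstPassageTraj v0 vk where
  toFun s := ⟨⟨s.1 + 1, Fin.cons v0 s.2.1⟩, firstPassageTraj_cond_iff.2 ⟨rfl, s.2.2⟩⟩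
  invFun
    | ⟨⟨0, _⟩, h⟩ => absurd h.1 (by norm_num)
    | ⟨⟨n + 1, p⟩, h⟩ => ⟨n, Fin.tail p, (firstPassageTraj_cond_iff.1 h).2⟩
  left_inv _ := rfl
  right_inv
    | ⟨⟨0, _⟩, h⟩ => absurd h.1 (by norm_num)
    | ⟨⟨n + 1, p⟩, h⟩ => Subtype.ext <| Sigma.ext rfl <| heq_of_eq <| by
      change Fin.cons v0 (Fin.tail p) = p
      rw [← (firstPassageTraj_cond_iff.1 h).1, Fin.cons_self_tail]

variable [Fintype V] [DecidableEq V]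

instance (j : V) (n : ℕ) : DecidablePred (HitsOnlyAtLast j (n := n)) := fun _ => by
  unfold HitsOnlyAtLast; infer_instance

theorem sum_pathProb_cons_of_hitsOnlyAtLast (T : Matrix V V ℝ) (j : V) (n : ℕ) (c : V) :
    ∑ q : Fin (n + 1) → V with HitsOnlyAtLast j q, pathProb T (Fin.cons c q : Fin (n + 2) → V)
      = (T.updateCol j 0 ^ n *ᵥ fun a => T a j) c := by
  induction n generalizing c with
  | zero =>
    rw [Finset.sum_eq_single_of_mem (fun _ => j) (by simp [hitsOnlyAtLast_zero])]
    · simp [pathProb]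
    · intro q hq hne
      refine absurd (funext fun i => ?_) hne
      rw [Fin.fin_one_eq_zero i]
      exact hitsOnlyAtLast_zero.1 (mem_filter.1 hq).2
  | succ n ih =>
    rw [pow_succ', ← mulVec_mulVec]
    change _ = ∑ b, T.updateCol j 0 c b * (T.updateCol j 0 ^ n *ᵥ fun a => T a j) b
    simp only [← ih, Finset.mul_sum, Finset.sum_filter]
    rw [← (Fin.consEquiv fun _ => V).sum_comp, Fintype.sum_prod_type]
    refine Finset.sum_congr rfl fun b _ => Finset.sum_congr rfl fun q _ => ?_
    simp only [Fin.consEquiv, Equiv.coe_fn_mk, hitsOnlyAtLast_cons, pathProb_cons, Fin.cons_zero,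
      updateCol_apply]
    by_cases hb : b = j <;> by_cases hq : HitsOnlyAtLast j q <;> simp [hb, hq]

end Paths

/-- For an irreducible finite Markov chain with stochastic matrix `T`, the probabilities
of the trajectories from `v0` to `vk` that visit `vk` only at the final step sum to `1`. -/
theorem sum_firstPassage_traj_prob_eq_one {V : Type*} [Fintype V] [DecidableEq V]
    (T : Matrix V V ℝ)
    (hnonneg : ∀ i j, 0 ≤ T i j)
    (hrow : ∀ i, ∑ j, T i j = 1)
    (hirred : ∀ i j : V, ∃ k : ℕ, 0 < (T ^ k) i j)
    (v0 vk : V) :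
    ∑' t : FirstPassageTraj v0 vk, trajProb T t = 1 := by
  have hT : T ∈ rowStochastic ℝ V := mem_rowStochastic_iff_sum.2 ⟨hnonneg, hrow⟩
  have hhit (i : V) : ∃ k > 0, 0 < (T ^ k) i vk :=
    exists_pos_pow_pos_of_mem_rowStochastic hT hirred i vk
  refine HasSum.tsum_eq ?_
  rw [← (firstPassageEquiv v0 vk).hasSum_iff]
  refine HasSum.sigma_of_nonneg (fun _ => pathProb_nonneg hnonneg _)
    (hasSum_updateCol_zero_pow_mulVec hT hhit v0) fun n => ?_
  rw [← sum_pathProb_cons_of_hitsOnlyAtLast,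
    Finset.sum_subtype _ fun q => Finset.mem_filter_univ (p := HitsOnlyAtLast vk) q]
  exact hasSum_fintype _
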